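/- (Theorem on smoother transformation) Consider the composite ensemble Z_{0:i} ∈ ℝ^{(n(i+1))×N} obtained by stacking ensembles Z_0, …, Z_i ∈ ℝ^{n×N}, and the composite observation matrix H̃ = [0, …, 0, H] ∈ ℝ^{m×n(i+1)} acting only on the last block. Let P_{0:i,0:i} be the (factored) sample covariance of Z_{0:i} and P_{i,i} the sample covariance of Z_i. Then: (a) P_{0:i,0:i}·H̃ᵀ = P_{0:i,i}·Hᵀ where P_{0:i,i} = (1/(N−1))·Z_{0:i}·(I − 𝟙𝟙ᵀ/N)²·Z_iᵀ; (b) H̃·P_{0:i,0:i}·H̃ᵀ = H·P_{i,i}·Hᵀ; and consequently (c) the EnKS analysis update Z_{0:i} ↦ Z_{0:i} − P_{0:i,0:i}·H̃ᵀ·(H̃·P_{0:i,0:i}·H̃ᵀ + R)⁻¹·(H̃·Z_{0:i} − D) equals Z_{0:i}·T, where T is the same N×N transformation matrix as in the EnKF analysis applied to the last-time ensemble Z_i alone with the same perturbed data matrix D. -/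
import Mathlib


open Matrix

theorem enks_smoother_transformation
    (n m N i : ℕ) (hN : 2 ≤ N) (hn : 0 < n) (hm : 0 < m) (hi : 0 < i)
    (Z : Fin (i + 1) → Matrix (Fin n) (Fin N) ℝ)
    (H : Matrix (Fin m) (Fin n) ℝ)
    (R : Matrix (Fin m) (Fin m) ℝ) (hR : R.PosDef)
    (D : Matrix (Fin m) (Fin N) ℝ)
    (ones : Fin N → ℝ) (hones : ones = fun _ => 1)
    (Q : Matrix (Fin N) (Fin N) ℝ)
    (hQ : Q = 1 - (N : ℝ)⁻¹ • vecMulVec ones ones)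
    (c : ℝ) (hc : c = ((N : ℝ) - 1)⁻¹)
    -- composite (stacked) ensemble
    (Zc : Matrix (Fin (i + 1) × Fin n) (Fin N) ℝ)
    (hZc : Zc = Matrix.of fun p ℓ => Z p.1 p.2 ℓ)
    -- composite observation matrix acting only on the last block
    (Ht : Matrix (Fin m) (Fin (i + 1) × Fin n) ℝ)
    (hHt : Ht = Matrix.of fun r p => if p.1 = Fin.last i then H r p.2 else 0)
    -- sample covariances in factored form
    (Pc : Matrix (Fin (i + 1) × Fin n) (Fin (i + 1) × Fin n) ℝ)
    (hPc : Pc = Zc * (c • (Q * Q)) * Zcᵀ)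
    (Pii : Matrix (Fin n) (Fin n) ℝ)
    (hPii : Pii = Z (Fin.last i) * (c • (Q * Q)) * (Z (Fin.last i))ᵀ)
    -- cross covariance P_{0:i,i}
    (Pci : Matrix (Fin (i + 1) × Fin n) (Fin n) ℝ)
    (hPci : Pci = Zc * (c • (Q * Q)) * (Z (Fin.last i))ᵀ)
    -- EnKF transformation matrix for the last-time ensemble
    (A : Matrix (Fin m) (Fin N) ℝ) (hA : A = H * Z (Fin.last i) * Q)
    (T : Matrix (Fin N) (Fin N) ℝ)
    (hT : T = 1 - c • (Q * Aᵀ * (c • (A * Aᵀ) + R)⁻¹ * (H * Z (Fin.last i) - D))) :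
    Pc * Htᵀ = Pci * Hᵀ ∧
    Ht * Pc * Htᵀ = H * Pii * Hᵀ ∧
    Zc - Pc * Htᵀ * (Ht * Pc * Htᵀ + R)⁻¹ * (Ht * Zc - D) = Zc * T := by

  have hQT : Qᵀ = Q := by
    subst hQ
    ext a b
    simp [Matrix.transpose_apply, Matrix.one_apply, vecMulVec_apply, mul_comm, eq_comm]
  have h1 : Ht * Zc = H * Z (Fin.last i) := by
    subst hHt hZc
    ext r ℓ
    simp [Matrix.mul_apply, Fintype.sum_prod_type, ite_mul]
  have h2 : Zcᵀ * Htᵀ = (Z (Fin.last i))ᵀ * Hᵀ := by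
    rw [← Matrix.transpose_mul, h1, Matrix.transpose_mul]
  have ha : Pc * Htᵀ = Pci * Hᵀ := by
    rw [hPc, hPci]
    simp only [Matrix.mul_assoc]
    rw [h2]
  have hb : Ht * Pc * Htᵀ = H * Pii * Hᵀ := by
    rw [hPc, hPii, Matrix.mul_assoc Ht, Matrix.mul_assoc, h2, ← Matrix.mul_assoc Ht,
      ← Matrix.mul_assoc Ht, h1]
    simp only [Matrix.mul_assoc]
  refine ⟨ha, hb, ?_⟩
  have hAA : H * Pii * Hᵀ = c • (A * Aᵀ) := by
    rw [hPii, hA]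
    simp only [Matrix.transpose_mul, hQT, Matrix.mul_smul, Matrix.smul_mul]
    simp only [Matrix.mul_assoc]
  have hQA : Q * Aᵀ = Q * Q * (Z (Fin.last i))ᵀ * Hᵀ := by
    rw [hA]
    simp only [Matrix.transpose_mul, hQT, Matrix.mul_assoc]
  have key : Pci * Hᵀ * (c • (A * Aᵀ) + R)⁻¹ * (H * Z (Fin.last i) - D) =
      Zc * (c • (Q * Aᵀ * (c • (A * Aᵀ) + R)⁻¹ * (H * Z (Fin.last i) - D))) := by
    rw [hPci, hQA]
    simp only [Matrix.mul_smul, Matrix.smul_mul, Matrix.mul_assoc]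
  rw [hb, hAA, ha, h1, hT, key, Matrix.mul_sub Zc, Matrix.mul_one]
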